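/- Vorticity transport equation (eq:omegagen): let V : ℝ⁴ → ℝ⁴ be a smooth vector field and let ω_{μν} := ∂_μ V_ν − ∂_ν V_μ be its vorticity. If V^λ ω_{λν} = 0 on ℝ⁴ for every ν ∈ {0,1,2,3}, then at every point of ℝ⁴ and for all μ, ν ∈ {0,1,2,3} one has V^λ ∂_λ ω_{μν} + (∂_μ V^λ) ω_{λν} + (∂_ν V^λ) ω_{μλ} = 0 (i.e. the Lie derivative of ω along V vanishes). -/

import Mathlib

open scoped BigOperators

noncomputable section

/-- Partial derivative `∂_μ` of a real-valued function on `ℝ⁴`. -/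
def pd (μ : Fin 4) (f : (Fin 4 → ℝ) → ℝ) : (Fin 4 → ℝ) → ℝ :=
  fun x => fderiv ℝ f x (Pi.single μ 1)

/-- Minkowski metric signs: `msign 0 = −1`, `msign i = 1` for `i = 1,2,3`. -/
def msign (μ : Fin 4) : ℝ := if μ = 0 then -1 else 1

/-- Derivative along the vector field `V` : `D_V f = V^μ ∂_μ f`. -/
def DV (V : (Fin 4 → ℝ) → Fin 4 → ℝ) (f : (Fin 4 → ℝ) → ℝ) : (Fin 4 → ℝ) → ℝ :=
  fun x => ∑ μ : Fin 4, V x μ * pd μ f x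

/-- The d'Alembertian `□f = −∂₀²f + Σᵢ ∂ᵢ²f = m^{μν} ∂_μ∂_ν f`. -/
def dAl (f : (Fin 4 → ℝ) → ℝ) : (Fin 4 → ℝ) → ℝ :=
  fun x => ∑ μ : Fin 4, msign μ * pd μ (pd μ f) x

lemma contDiff_pd {f : (Fin 4 → ℝ) → ℝ} (hf : ContDiff ℝ (⊤ : ℕ∞) f) (μ : Fin 4) :
    ContDiff ℝ (⊤ : ℕ∞) (pd μ f) := by
  have h1 : ContDiff ℝ (⊤ : ℕ∞) (fderiv ℝ f) := hf.fderiv_right (by simp)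
  exact (ContinuousLinearMap.apply ℝ ℝ (Pi.single μ 1 : Fin 4 → ℝ)).contDiff.comp h1

lemma pd_comm {f : (Fin 4 → ℝ) → ℝ} (hf : ContDiff ℝ (⊤ : ℕ∞) f) (μ ν : Fin 4) (x : Fin 4 → ℝ) :
    pd μ (pd ν f) x = pd ν (pd μ f) x := by
  have hsymm : IsSymmSndFDerivAt ℝ f x :=
    (hf.contDiffAt).isSymmSndFDerivAt (by rw [minSmoothness_of_isRCLikeNormedField]; exact WithTop.coe_le_coe.mpr le_top)
  have key : ∀ (a b : Fin 4),
      pd a (pd b f) x = fderiv ℝ (fderiv ℝ f) x (Pi.single a 1) (Pi.single b 1) := by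
    intro a b
    have hdf : DifferentiableAt ℝ (fderiv ℝ f) x :=
      (hf.fderiv_right (m := 1) (WithTop.coe_le_coe.mpr le_top)).differentiable (by simp) x
    show fderiv ℝ (fun y => fderiv ℝ f y (Pi.single b 1)) x (Pi.single a 1) = _
    rw [fderiv_clm_apply hdf (differentiableAt_const _)]
    simp
  rw [key μ ν, key ν μ, hsymm]

lemma pd_mul {f g : (Fin 4 → ℝ) → ℝ} {x : Fin 4 → ℝ}
    (hf : DifferentiableAt ℝ f x) (hg : DifferentiableAt ℝ g x) (μ : Fin 4) :
    pd μ (fun y => f y * g y) x = pd μ f x * g x + f x * pd μ g x := by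
  show fderiv ℝ (fun y => f y * g y) x (Pi.single μ 1) = _
  rw [fderiv_fun_mul hf hg]
  simp [pd]; ring

lemma pd_const_mul {g : (Fin 4 → ℝ) → ℝ} {x : Fin 4 → ℝ}
    (hg : DifferentiableAt ℝ g x) (c : ℝ) (μ : Fin 4) :
    pd μ (fun y => c * g y) x = c * pd μ g x := by
  show fderiv ℝ (fun y => c * g y) x (Pi.single μ 1) = _
  rw [fderiv_const_mul hg]
  simp [pd]

lemma pd_sum {f : Fin 4 → (Fin 4 → ℝ) → ℝ} {x : Fin 4 → ℝ}
    (hf : ∀ i, DifferentiableAt ℝ (f i) x) (μ : Fin 4) :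
    pd μ (fun y => ∑ i : Fin 4, f i y) x = ∑ i : Fin 4, pd μ (f i) x := by
  show fderiv ℝ (fun y => ∑ i ∈ Finset.univ, f i y) x (Pi.single μ 1) = _
  rw [fderiv_fun_sum (fun i _ => hf i)]
  simp [pd]

lemma pd_sub {f g : (Fin 4 → ℝ) → ℝ} {x : Fin 4 → ℝ}
    (hf : DifferentiableAt ℝ f x) (hg : DifferentiableAt ℝ g x) (μ : Fin 4) :
    pd μ (fun y => f y - g y) x = pd μ f x - pd μ g x := by
  show fderiv ℝ (fun y => f y - g y) x (Pi.single μ 1) = _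
  rw [fderiv_fun_sub hf hg]
  simp [pd]

/-- Vorticity transport equation (eq:omegagen): if the vorticity
`ω_{μν} := ∂_μV_ν − ∂_νV_μ` satisfies `V^λω_{λν} = 0`, then
`V^λ∂_λω_{μν} + (∂_μV^λ)ω_{λν} + (∂_νV^λ)ω_{μλ} = 0`. -/
theorem vorticity_transport
    (V : (Fin 4 → ℝ) → Fin 4 → ℝ) (hV : ContDiff ℝ (⊤ : ℕ∞) V)
    (ω : Fin 4 → Fin 4 → (Fin 4 → ℝ) → ℝ)
    (hω : ∀ μ ν : Fin 4, ω μ ν = fun y =>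
      pd μ (fun z => msign ν * V z ν) y - pd ν (fun z => msign μ * V z μ) y)
    (hann : ∀ (ν : Fin 4) (x : Fin 4 → ℝ), ∑ lam : Fin 4, V x lam * ω lam ν x = 0)
    (μ ν : Fin 4) (x : Fin 4 → ℝ) :
    (∑ lam : Fin 4, V x lam * pd lam (ω μ ν) x)
      + (∑ lam : Fin 4, pd μ (fun y => V y lam) x * ω lam ν x)
      + (∑ lam : Fin 4, pd ν (fun y => V y lam) x * ω μ lam x) = 0 := by
  -- components of V
  set W : Fin 4 → (Fin 4 → ℝ) → ℝ := fun lam y => V y lam with hWdef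
  have hW : ∀ lam, ContDiff ℝ (⊤ : ℕ∞) (W lam) := fun lam => (contDiff_pi.mp hV) lam
  have hWd : ∀ (lam : Fin 4) (y : Fin 4 → ℝ), DifferentiableAt ℝ (W lam) y :=
    fun lam y => (hW lam).differentiable (by simp) y
  -- ω as explicit function
  have hωfun : ∀ a b : Fin 4, ω a b =
      fun y => msign b * pd a (W b) y - msign a * pd b (W a) y := by
    intro a b
    rw [hω a b]
    funext y
    rw [pd_const_mul (hWd b y) (msign b) a, pd_const_mul (hWd a y) (msign a) b]
  have hωsm : ∀ a b : Fin 4, ContDiff ℝ (⊤ : ℕ∞) (ω a b) := by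
    intro a b
    rw [hωfun a b]
    exact ((contDiff_const.mul (contDiff_pd (hW b) a)).sub
      (contDiff_const.mul (contDiff_pd (hW a) b)))
  have hωd : ∀ (a b : Fin 4) (y : Fin 4 → ℝ), DifferentiableAt ℝ (ω a b) y :=
    fun a b y => (hωsm a b).differentiable (by simp) y
  -- pointwise antisymmetry
  have hanti : ∀ (a b : Fin 4) (y : Fin 4 → ℝ), ω a b y = -ω b a y := by
    intro a b y
    rw [hωfun a b, hωfun b a]; ring
  -- derivative of ω
  have hpdω : ∀ (a b c : Fin 4) (y : Fin 4 → ℝ), pd a (ω b c) y =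
      msign c * pd a (pd b (W c)) y - msign b * pd a (pd c (W b)) y := by
    intro a b c y
    rw [hωfun b c]
    rw [pd_sub (differentiableAt_const _ |>.fun_mul ((contDiff_pd (hW c) b).differentiable (by simp) y))
        (differentiableAt_const _ |>.fun_mul ((contDiff_pd (hW b) c).differentiable (by simp) y)) a,
      pd_const_mul ((contDiff_pd (hW c) b).differentiable (by simp) y) _ a,
      pd_const_mul ((contDiff_pd (hW b) c).differentiable (by simp) y) _ a]
  -- differentiating the annihilation identity
  have hD : ∀ (a b : Fin 4) (y : Fin 4 → ℝ),
      (∑ lam : Fin 4, pd a (W lam) y * ω lam b y)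
        + (∑ lam : Fin 4, V y lam * pd a (ω lam b) y) = 0 := by
    intro a b y
    have h0 : (fun y => ∑ lam : Fin 4, V y lam * ω lam b y) = fun _ => (0:ℝ) :=
      funext (hann b)
    have h1 : pd a (fun y => ∑ lam : Fin 4, V y lam * ω lam b y) y = 0 := by
      rw [h0]; simp [pd]
    rw [pd_sum (fun lam => (hWd lam y).fun_mul (hωd lam b y)) a] at h1
    calc (∑ lam : Fin 4, pd a (W lam) y * ω lam b y)
          + (∑ lam : Fin 4, V y lam * pd a (ω lam b) y)
        = ∑ lam : Fin 4, (pd a (W lam) y * ω lam b y + V y lam * pd a (ω lam b) y) := by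
          rw [Finset.sum_add_distrib]
      _ = ∑ lam : Fin 4, pd a (fun z => W lam z * ω lam b z) y := by
          refine Finset.sum_congr rfl fun lam _ => ?_
          rw [pd_mul (hWd lam y) (hωd lam b y) a]
      _ = 0 := h1
  -- rewrite B and C
  have hB : (∑ lam : Fin 4, pd μ (fun y => V y lam) x * ω lam ν x)
      = -∑ lam : Fin 4, V x lam * pd μ (ω lam ν) x := by
    have := hD μ ν x; linarith
  have hC : (∑ lam : Fin 4, pd ν (fun y => V y lam) x * ω μ lam x)
      = ∑ lam : Fin 4, V x lam * pd ν (ω lam μ) x := by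
    have h2 := hD ν μ x
    have h3 : (∑ lam : Fin 4, pd ν (fun y => V y lam) x * ω μ lam x)
        = -∑ lam : Fin 4, pd ν (W lam) x * ω lam μ x := by
      rw [← Finset.sum_neg_distrib]
      refine Finset.sum_congr rfl fun lam _ => ?_
      rw [hanti μ lam x]; ring
    rw [h3]; linarith
  rw [hB, hC]
  have : (∑ lam : Fin 4, V x lam * pd lam (ω μ ν) x)
      + -(∑ lam : Fin 4, V x lam * pd μ (ω lam ν) x)
      + (∑ lam : Fin 4, V x lam * pd ν (ω lam μ) x)
      = ∑ lam : Fin 4, (V x lam * pd lam (ω μ ν) x - V x lam * pd μ (ω lam ν) x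
          + V x lam * pd ν (ω lam μ) x) := by
    rw [Finset.sum_add_distrib, Finset.sum_sub_distrib]; ring
  rw [this]
  refine Finset.sum_eq_zero fun lam _ => ?_
  rw [hpdω lam μ ν x, hpdω μ lam ν x, hpdω ν lam μ x,
    pd_comm (hW ν) lam μ x, pd_comm (hW μ) lam ν x, pd_comm (hW lam) μ ν x]
  ring
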